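/- arXiv:2207.07404 — 7 statements merged into one kernel-verified Lean document; each statement's English description precedes it below -/
import Mathlib

section
/- Let G be a finite group and let K be a subgroup of G. If K is an Oliver group, then G is an Oliver group. Equivalently (contrapositive): if G contains an Oliver series, then every subgroup K of G contains an Oliver series. -/
/-- A finite group `G` *contains an Oliver series* if there are subgroups
`P ≤ H ≤ G` with `P` normal in `H` and `H` normal in `G`, such that `|P|` is a prime
power `p ^ a` (with `a ≥ 0`, so the trivial group is allowed), `|G/H|` is a prime power
`q ^ b` (with `b ≥ 0`), and `H/P` is cyclic. -/
def HasOliverSeries (G : Type*) [Group G] : Prop :=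
  ∃ P H : Subgroup G, ∃ _ : P ≤ H, ∃ _ : H.Normal, ∃ hP : (P.subgroupOf H).Normal,
    (∃ p a : ℕ, p.Prime ∧ Nat.card P = p ^ a) ∧
    (∃ q b : ℕ, q.Prime ∧ Nat.card (G ⧸ H) = q ^ b) ∧
    (letI := hP; IsCyclic (H ⧸ P.subgroupOf H))

/-- A finite group is an *Oliver group* if it contains no Oliver series. -/
def IsOliverGroup (G : Type*) [Group G] : Prop := ¬ HasOliverSeries G

/-! Intersecting an Oliver series `P ⊴ H ⊴ G` with a subgroup `K` gives an Oliver series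
`P ∩ K ⊴ H ∩ K ⊴ K` of `K`: `|P ∩ K|` divides `|P|`, `|K / (H ∩ K)|` divides `|G / H|`
because `H` is normal, and `(H ∩ K)/(P ∩ K)` embeds into the cyclic group `H/P`. -/

theorem Nat.exists_prime_pow_eq_of_dvd {n m : ℕ} (hnm : n ∣ m)
    (hm : ∃ p a : ℕ, p.Prime ∧ m = p ^ a) : ∃ p a : ℕ, p.Prime ∧ n = p ^ a := by
  obtain ⟨p, a, hp, rfl⟩ := hm
  obtain ⟨c, -, rfl⟩ := (Nat.dvd_prime_pow hp).mp hnm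
  exact ⟨p, c, hp, rfl⟩

theorem QuotientGroup.isCyclic_quotient_comap {A B : Type*} [Group A] [Group B] (f : A →* B)
    (N : Subgroup B) [N.Normal] [IsCyclic (B ⧸ N)] : IsCyclic (A ⧸ N.comap f) := by
  have hker : ((mk' N).comp f).ker = N.comap f := by
    rw [← MonoidHom.comap_ker, ker_mk']
  exact (quotientMulEquivOfEq hker).isCyclic.mp
    (isCyclic_of_injective _ (kerLift_injective ((mk' N).comp f)))

theorem HasOliverSeries.subgroup {G : Type*} [Group G] (h : HasOliverSeries G)
    (K : Subgroup G) : HasOliverSeries K := by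
  obtain ⟨P, H, hPH, hH, hP, hcardP, hcardGH, hcyc⟩ := h
  let ι : H.subgroupOf K →* H :=
    (K.subtype.comp (H.subgroupOf K).subtype).codRestrict H fun x => x.2
  -- `(P ∩ K)` inside `H ∩ K` is definitionally the preimage of `P` inside `H` under `ι`.
  have hP' : ((P.subgroupOf K).subgroupOf (H.subgroupOf K)).Normal := hP.comap ι
  refine ⟨P.subgroupOf K, H.subgroupOf K, fun x hx => hPH hx, hH.subgroupOf K, hP', ?_, ?_, ?_⟩
  · exact Nat.exists_prime_pow_eq_of_dvd
      (Subgroup.card_comap_dvd_of_injective P K.subtype Subtype.coe_injective) hcardP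
  · exact Nat.exists_prime_pow_eq_of_dvd (Subgroup.relIndex_dvd_index_of_normal H K) hcardGH
  · exact QuotientGroup.isCyclic_quotient_comap ι (P.subgroupOf H)

theorem isOliverGroup_of_subgroup_general (G : Type*) [Group G] :
    (∀ K : Subgroup G, IsOliverGroup K → IsOliverGroup G) ∧
    (HasOliverSeries G → ∀ K : Subgroup G, HasOliverSeries K) :=
  ⟨fun K hK hG => hK (hG.subgroup K), fun hG K => hG.subgroup K⟩

/-- If a subgroup `K` of a finite group `G` is an Oliver group, then `G` is an Oliver
group; equivalently (contrapositive), if `G` contains an Oliver series, then every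
subgroup of `G` contains an Oliver series. -/
theorem isOliverGroup_of_subgroup (G : Type*) [Group G] [Finite G] :
    (∀ K : Subgroup G, IsOliverGroup K → IsOliverGroup G) ∧
    (HasOliverSeries G → ∀ K : Subgroup G, HasOliverSeries K) :=
  isOliverGroup_of_subgroup_general G
end

section
/- Let G be a finite group and let N be a normal subgroup of G. If the quotient group G/N is an Oliver group, then G is an Oliver group. Equivalently (contrapositive): if G contains an Oliver series, then G/N contains an Oliver series for every normal subgroup N of G. -/
/-- If a quotient `G/N` of a finite group `G` by a normal subgroup `N` is an Oliver
group, then `G` is an Oliver group; equivalently (contrapositive), if `G` contains an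
Oliver series, then `G/N` contains an Oliver series for every normal subgroup `N`. -/
theorem isOliverGroup_of_quotient (G : Type*) [Group G] [Finite G] :
    (∀ (N : Subgroup G) (_ : N.Normal), IsOliverGroup (G ⧸ N) → IsOliverGroup G) ∧
    (HasOliverSeries G → ∀ (N : Subgroup G) (_ : N.Normal), HasOliverSeries (G ⧸ N)) := by
  have key : HasOliverSeries G → ∀ (N : Subgroup G) (_ : N.Normal), HasOliverSeries (G ⧸ N) := by
    rintro ⟨P, H, hPH, hHn, hPn, ⟨p, a, hp, hcardP⟩, ⟨q, b, hq, hcardQ⟩, hcyc⟩ N hN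
    set π := QuotientGroup.mk' N with hπ
    have hπsurj : Function.Surjective π := QuotientGroup.mk'_surjective N
    -- normality of the image of P in the image of H
    have hn : ((P.map π).subgroupOf (H.map π)).Normal := by
      constructor
      rintro ⟨x, hx⟩ hxP ⟨g, hg⟩
      simp only [Subgroup.mem_subgroupOf] at hxP ⊢
      obtain ⟨p', hp', rfl⟩ := hxP
      obtain ⟨h', hh', rfl⟩ := hg
      have : h' * p' * h'⁻¹ ∈ P := by
        have := hPn.conj_mem ⟨p', hPH hp'⟩ (by simpa [Subgroup.mem_subgroupOf] using hp')
          ⟨h', hh'⟩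
        simpa [Subgroup.mem_subgroupOf] using this
      exact ⟨h' * p' * h'⁻¹, this, by simp [map_mul]⟩
    refine ⟨P.map π, H.map π, Subgroup.map_mono hPH, hHn.map π hπsurj, hn, ?_, ?_, ?_⟩
    · -- card of image of P is a prime power
      have hdvd : Nat.card (P.map π) ∣ Nat.card P :=
        Subgroup.card_dvd_of_surjective (π.subgroupMap P) (π.subgroupMap_surjective P)
      rw [hcardP] at hdvd
      obtain ⟨c, _, hc⟩ := (Nat.dvd_prime_pow hp).mp hdvd
      exact ⟨p, c, hp, hc⟩
    · -- card of quotient by image of H is a prime power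
      have hdvd : (H.map π).index ∣ H.index := by
        rw [← Subgroup.index_comap_of_surjective _ hπsurj]
        exact Subgroup.index_dvd_of_le (Subgroup.le_comap_map _ _)
      rw [← Subgroup.index_eq_card] at hcardQ ⊢
      rw [hcardQ] at hdvd
      obtain ⟨c, _, hc⟩ := (Nat.dvd_prime_pow hq).mp hdvd
      exact ⟨q, c, hq, hc⟩
    · -- cyclicity of the quotient
      letI := hn
      let φ : H →* (H.map π) ⧸ ((P.map π).subgroupOf (H.map π)) :=
        (QuotientGroup.mk' ((P.map π).subgroupOf (H.map π))).comp (π.subgroupMap H)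
      have hker : ∀ x ∈ P.subgroupOf H, φ x = 1 := by
        rintro ⟨x, hxH⟩ hx
        simp only [Subgroup.mem_subgroupOf] at hx
        have : (π.subgroupMap H) ⟨x, hxH⟩ ∈ (P.map π).subgroupOf (H.map π) := by
          simp only [Subgroup.mem_subgroupOf]
          exact ⟨x, hx, rfl⟩
        simpa [φ, QuotientGroup.eq_one_iff] using this
      let ψ := QuotientGroup.lift (P.subgroupOf H) φ hker
      have hψsurj : Function.Surjective ψ := by
        intro y
        obtain ⟨x, hx⟩ := (QuotientGroup.mk'_surjective _).comp
          (π.subgroupMap_surjective H) y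
        exact ⟨QuotientGroup.mk x, hx⟩
      exact isCyclic_of_surjective ψ hψsurj
  exact ⟨fun N hN hO hG => hO (key hG N hN), key⟩
end

section
/- Let G be a finite nilpotent group. If there exist at least three distinct primes p dividing the order of G for which a Sylow p-subgroup of G is not cyclic, then G is an Oliver group. -/
/-- Key step: if `G` has an Oliver series with parameters `p, q`, then for any prime
`r ≠ p, q`, every Sylow `r`-subgroup of `G` is cyclic. -/
lemma sylow_isCyclic_aux {G : Type*} [Group G] [Finite G]
    {P H : Subgroup G} (hPH : P ≤ H) (hHn : H.Normal) (hPn : (P.subgroupOf H).Normal)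
    {p a q b r : ℕ} (hp : p.Prime) (hq : q.Prime) (hr : r.Prime)
    (hrp : r ≠ p) (hrq : r ≠ q)
    (hcardP : Nat.card P = p ^ a) (hcardQ : Nat.card (G ⧸ H) = q ^ b)
    (hcyc : IsCyclic (H ⧸ P.subgroupOf H)) (S : Sylow r G) : IsCyclic S := by
  haveI := hHn
  -- S ≤ H
  have hSH : (S : Subgroup G) ≤ H := by
    intro x hx
    obtain ⟨k, hk⟩ := S.2 ⟨x, hx⟩
    have hk' : (x : G) ^ r ^ k = 1 := by
      have := congrArg (Subtype.val) hk
      simpa using this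
    rw [← QuotientGroup.eq_one_iff (N := H)]
    have h1 : ((x : G ⧸ H)) ^ r ^ k = 1 := by
      rw [← QuotientGroup.mk_pow H, hk', QuotientGroup.mk_one]
    have h2 : orderOf ((x : G) : G ⧸ H) ∣ r ^ k := orderOf_dvd_of_pow_eq_one h1
    have h3 : orderOf ((x : G) : G ⧸ H) ∣ q ^ b := by
      rw [← hcardQ]; exact orderOf_dvd_natCard _
    have hcop : Nat.Coprime (r ^ k) (q ^ b) :=
      Nat.Coprime.pow _ _ ((Nat.coprime_primes hr hq).2 hrq)
    have : orderOf ((x : G) : G ⧸ H) = 1 :=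
      Nat.eq_one_of_dvd_coprimes hcop h2 h3
    simpa [orderOf_eq_one_iff] using this
  -- the map S → H ⧸ P.subgroupOf H
  let f : S →* (H ⧸ P.subgroupOf H) :=
    (QuotientGroup.mk' (P.subgroupOf H)).comp (Subgroup.inclusion hSH)
  have hinj : Function.Injective f := by
    rw [← MonoidHom.ker_eq_bot_iff, Subgroup.eq_bot_iff_forall]
    intro x hx
    have hxP : (x : G) ∈ P := by
      have : Subgroup.inclusion hSH x ∈ P.subgroupOf H := by
        simpa [f, QuotientGroup.eq_one_iff] using hx
      simpa [Subgroup.mem_subgroupOf] using this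
    obtain ⟨k, hk⟩ := S.2 x
    have hk' : (x : G) ^ r ^ k = 1 := by
      have := congrArg (Subtype.val) hk
      simpa using this
    have h2 : orderOf (⟨(x : G), hxP⟩ : P) ∣ r ^ k := by
      apply orderOf_dvd_of_pow_eq_one
      ext
      simpa using hk'
    have h3 : orderOf (⟨(x : G), hxP⟩ : P) ∣ p ^ a := by
      rw [← hcardP]; exact orderOf_dvd_natCard _
    have hcop : Nat.Coprime (r ^ k) (p ^ a) :=
      Nat.Coprime.pow _ _ ((Nat.coprime_primes hr hp).2 hrp)
    have ho : orderOf (⟨(x : G), hxP⟩ : P) = 1 :=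
      Nat.eq_one_of_dvd_coprimes hcop h2 h3
    have : ((⟨(x : G), hxP⟩ : P) : G) = 1 := by
      have := orderOf_eq_one_iff.mp ho
      simpa using congrArg Subtype.val this
    ext; simpa using this
  let e := MonoidHom.ofInjective hinj
  exact isCyclic_of_surjective e.symm e.symm.surjective

/-- A finite nilpotent group with at least three distinct primes `p` dividing its order
for which a Sylow `p`-subgroup is not cyclic is an Oliver group. -/
theorem isOliverGroup_of_nilpotent (G : Type*) [Group G] [Finite G]
    [Group.IsNilpotent G]
    (h : ∃ p q r : ℕ, p.Prime ∧ q.Prime ∧ r.Prime ∧ p ≠ q ∧ p ≠ r ∧ q ≠ r ∧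
      p ∣ Nat.card G ∧ q ∣ Nat.card G ∧ r ∣ Nat.card G ∧
      (∃ S : Sylow p G, ¬ IsCyclic S) ∧ (∃ S : Sylow q G, ¬ IsCyclic S) ∧
      (∃ S : Sylow r G, ¬ IsCyclic S)) :
    IsOliverGroup G := by
  obtain ⟨p₁, p₂, p₃, hp₁, hp₂, hp₃, h12, h13, h23, _, _, _, hS₁, hS₂, hS₃⟩ := h
  rintro ⟨P, H, hPH, hHn, hPn, ⟨p, a, hp, hcardP⟩, ⟨q, b, hq, hcardQ⟩, hcyc⟩
  -- pick r among p₁, p₂, p₃ distinct from p and q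
  have key : ∃ r : ℕ, r.Prime ∧ r ≠ p ∧ r ≠ q ∧ ∃ S : Sylow r G, ¬ IsCyclic S := by
    by_cases h1 : p₁ ≠ p ∧ p₁ ≠ q
    · exact ⟨p₁, hp₁, h1.1, h1.2, hS₁⟩
    by_cases h2 : p₂ ≠ p ∧ p₂ ≠ q
    · exact ⟨p₂, hp₂, h2.1, h2.2, hS₂⟩
    rw [not_and_or, not_not, not_not] at h1 h2
    refine ⟨p₃, hp₃, ?_, ?_, hS₃⟩ <;> omega
  obtain ⟨r, hr, hrp, hrq, S, hS⟩ := key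
  exact hS (sylow_isCyclic_aux hPH hHn hPn hp hq hr hrp hrq hcardP hcardQ hcyc S)
end

section
/- Every finite group of order strictly less than 60 is not an Oliver group (i.e., it contains an Oliver series), while the alternating group A₅ on 5 letters, of order 60, is an Oliver group; thus A₅ is the smallest finite Oliver group. -/
/-!
For most orders `n < 60` some prime `p` is such that no divisor `d > 1` of `n` is `≡ 1 [MOD p]`,
so the Sylow `p`-subgroup `P` is normal, and `n` has at most one prime factor other than `p`,
so `G/P` has prime-power order and `P ≤ P` is an Oliver series. For the other orders:
* `12`, `36`, `56`: a Sylow `p`-subgroup (`p = 3, 3, 7`) is normal, or it is abelian and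
  self-normalizing and then has a normal complement by Burnside's transfer theorem;
* `24`, `48`: if there are three Sylow `2`-subgroups, the action `φ` on them has a `2`-group
  kernel `K` with `G/K` of order `3` or `G/K ≃ S₃`, and `K ≤ φ⁻¹(A₃)` is an
  Oliver series;
* `30`, `42`: the Sylow `2`-subgroup is cyclic for the smallest prime, so it has a normal
  complement `K`, and the unique Sylow `r`-subgroup `R` of `K` (`r = 5, 7`) is characteristic
  in `K`, hence normal in `G`, so `R ≤ K` is an Oliver series.

In a simple group an Oliver series has `H, P ∈ {1, G}`, which forces `|G|` to be a prime power
or `G` to be cyclic of prime order; `|A₅| = 60` is neither.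
-/

open Subgroup

theorem Nat.exists_prime_pow_eq_of_card_primeFactors_erase_le_one {m n p : ℕ} (hmn : m ∣ n)
    (hn : n ≠ 0) (hpm : ¬ p ∣ m) (h : (n.primeFactors.erase p).card ≤ 1) :
    ∃ q b, q.Prime ∧ m = q ^ b := by
  have hsub : m.primeFactors ⊆ n.primeFactors.erase p := fun r hr =>
    Finset.mem_erase.mpr ⟨fun hrp => hpm (hrp ▸ Nat.dvd_of_mem_primeFactors hr),
      Nat.primeFactors_mono hmn hn hr⟩
  rcases Nat.le_one_iff_eq_zero_or_eq_one.mp ((Finset.card_le_card hsub).trans h) with h0 | h1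
  · have hm : m = 1 := (Nat.primeFactors_eq_empty.mp (Finset.card_eq_zero.mp h0)).resolve_left
      (ne_zero_of_dvd_ne_zero hn hmn)
    exact ⟨2, 0, Nat.prime_two, hm⟩
  · obtain ⟨q, b, hq, -, hqb⟩ :=
      (isPrimePow_nat_iff m).mp (isPrimePow_iff_card_primeFactors_eq_one.mpr h1)
    exact ⟨q, b, hq, hqb.symm⟩

variable {G : Type*} [Group G]

namespace HasOliverSeries

variable [Finite G] {p q : ℕ} [Fact p.Prime] [Fact q.Prime]

theorem of_le {P H : Subgroup G} [P.Normal] [H.Normal] (hPH : P ≤ H) (hP : IsPGroup p P)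
    (hH : IsPGroup q (G ⧸ H)) (hcyc : IsCyclic (H ⧸ P.subgroupOf H)) : HasOliverSeries G := by
  obtain ⟨a, ha⟩ := IsPGroup.iff_card.mp hP
  obtain ⟨b, hb⟩ := IsPGroup.iff_card.mp hH
  exact ⟨P, H, hPH, ‹_›, inferInstance, ⟨p, a, Fact.out, ha⟩, ⟨q, b, Fact.out, hb⟩,
    hcyc⟩

theorem of_normal {N : Subgroup G} [N.Normal] (hN : IsPGroup p N) (hQ : IsPGroup q (G ⧸ N)) :
    HasOliverSeries G :=
  have : Subsingleton (N ⧸ N.subgroupOf N) := (Nat.card_eq_one_iff_unique.mp N.relIndex_self).1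
  of_le le_rfl hN hQ isCyclic_of_subsingleton

end HasOliverSeries

namespace Sylow

variable [Finite G] {p : ℕ} [Fact p.Prime]

theorem card_mod_eq_one : Nat.card (Sylow p G) % p = 1 :=
  Eq.trans (card_sylow_modEq_one p G) (Nat.mod_eq_of_lt (Fact.out : p.Prime).one_lt)

theorem subsingleton_of_forall_dvd_card (h : ∀ d ∈ (Nat.card G).divisors, d % p = 1 → d = 1) :
    Subsingleton (Sylow p G) := by
  obtain ⟨P⟩ : Nonempty (Sylow p G) := inferInstance
  have hdvd : Nat.card (Sylow p G) ∈ (Nat.card G).divisors :=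
    Nat.mem_divisors.mpr ⟨P.card_dvd_index.trans (index_dvd_card _), Nat.card_pos.ne'⟩
  exact (Nat.card_eq_one_iff_unique.mp (h _ hdvd card_mod_eq_one)).1

theorem card_eq_pow_of_card_eq_mul (P : Sylow p G) {m k : ℕ} (hG : Nat.card G = m * p ^ k)
    (hm : ¬ p ∣ m) : Nat.card P = p ^ k := by
  have hp : p.Prime := Fact.out
  have hm0 : m ≠ 0 := by rintro rfl; exact hm (dvd_zero p)
  rw [P.card_eq_multiplicity, hG, Nat.factorization_mul hm0 (pow_ne_zero _ hp.ne_zero),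
    Finsupp.add_apply, hp.factorization_pow, Finsupp.single_eq_same,
    Nat.factorization_eq_zero_of_not_dvd hm, zero_add]

theorem index_eq_of_card_eq_mul (P : Sylow p G) {m k : ℕ} (hG : Nat.card G = m * p ^ k)
    (hm : ¬ p ∣ m) : (P : Subgroup G).index = m := by
  have h := (P : Subgroup G).card_mul_index
  rw [P.card_eq_pow_of_card_eq_mul hG hm, hG, mul_comm m] at h
  exact Nat.eq_of_mul_eq_mul_left (pow_pos (Fact.out : p.Prime).pos k) h

theorem normalizer_eq_of_card_eq_index (P : Sylow p G)
    (h : Nat.card (Sylow p G) = (P : Subgroup G).index) :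
    normalizer (P : Set G) = (P : Subgroup G) := by
  have h1 := relIndex_mul_index (H := (P : Subgroup G)) (K := normalizer (P : Set G))
    P.le_normalizer
  rw [← P.card_eq_index_normalizer, h, Nat.mul_eq_right index_ne_zero_of_finite] at h1
  exact le_antisymm (relIndex_eq_one.mp h1) P.le_normalizer

theorem exists_normal_isComplement'_of_card_eq_index (P : Sylow p G) [IsMulCommutative P]
    (h : Nat.card (Sylow p G) = (P : Subgroup G).index) :
    ∃ K : Subgroup G, K.Normal ∧ K.IsComplement' P := by
  have hle : normalizer (P : Set G) ≤ centralizer (P : Set G) := by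
    rw [P.normalizer_eq_of_card_eq_index h]
    exact le_centralizer_iff_isMulCommutative.mpr ‹_›
  exact ⟨_, inferInstance, MonoidHom.ker_transferSylow_isComplement' P hle⟩

end Sylow

variable [Finite G]

theorem hasOliverSeries_of_forall_dvd_card {p : ℕ} (hp : p.Prime)
    (hforced : ∀ d ∈ (Nat.card G).divisors, d % p = 1 → d = 1)
    (hfactors : ((Nat.card G).primeFactors.erase p).card ≤ 1) : HasOliverSeries G := by
  have := Fact.mk hp
  obtain ⟨P⟩ : Nonempty (Sylow p G) := inferInstance
  have := Sylow.subsingleton_of_forall_dvd_card hforced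
  have := P.normal_of_subsingleton
  obtain ⟨q, b, hq, hb⟩ := Nat.exists_prime_pow_eq_of_card_primeFactors_erase_le_one
    (index_dvd_card (P : Subgroup G)) Nat.card_pos.ne' P.not_dvd_index hfactors
  have := Fact.mk hq
  exact .of_normal P.isPGroup' (IsPGroup.of_card hb)

theorem isMulCommutative_of_card_eq_prime_pow {H : Type*} [Group H] {p k : ℕ} [Fact p.Prime]
    (hH : Nat.card H = p ^ k) (hk : k ≤ 2) : IsMulCommutative H := by
  rcases (by omega : k ≤ 1 ∨ k = 2) with hk | rfl
  · have : IsCyclic H :=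
      isCyclic_of_card_dvd_prime (hH ▸ (pow_dvd_pow p hk).trans (pow_one p).dvd)
    infer_instance
  · exact IsPGroup.isMulCommutative_of_card_eq_prime_sq hH

theorem hasOliverSeries_of_card_eq_mul_prime_pow {p q b k : ℕ} (hp : p.Prime) (hq : q.Prime)
    (hpq : p ≠ q) (hk : k ≤ 2) (hG : Nat.card G = q ^ b * p ^ k)
    (h : ∀ d ∈ (q ^ b).divisors, d % p = 1 → d = 1 ∨ d = q ^ b) : HasOliverSeries G := by
  have := Fact.mk hp
  have := Fact.mk hq
  obtain ⟨P⟩ : Nonempty (Sylow p G) := inferInstance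
  have hpm : ¬ p ∣ q ^ b := fun hd =>
    hpq ((Nat.prime_dvd_prime_iff_eq hp hq).mp (hp.dvd_of_dvd_pow hd))
  have hindex := P.index_eq_of_card_eq_mul hG hpm
  rcases h _ (Nat.mem_divisors.mpr ⟨hindex ▸ P.card_dvd_index, pow_ne_zero _ hq.ne_zero⟩)
    Sylow.card_mod_eq_one with hone | hcard
  · have : Subsingleton (Sylow p G) := (Nat.card_eq_one_iff_unique.mp hone).1
    have := P.normal_of_subsingleton
    exact .of_normal P.isPGroup' (IsPGroup.of_card hindex)
  · have hPcard := P.card_eq_pow_of_card_eq_mul hG hpm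
    have := isMulCommutative_of_card_eq_prime_pow hPcard hk
    obtain ⟨K, hK, hKP⟩ :=
      P.exists_normal_isComplement'_of_card_eq_index (hcard.trans hindex.symm)
    exact .of_normal (IsPGroup.of_card (hKP.index_eq_card.symm.trans hindex))
      (IsPGroup.of_card (hKP.symm.index_eq_card.trans hPcard))

theorem hasOliverSeries_of_card_sylow_two_eq_three (P : Sylow 2 G)
    (hindex : (P : Subgroup G).index = 3) (h : Nat.card (Sylow 2 G) = 3) : HasOliverSeries G := by
  classical
  let φ := MulAction.toPermHom G (Sylow 2 G)
  have hKP : φ.ker ≤ P := fun g hg => by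
    rw [← P.normalizer_eq_of_card_eq_index (h.trans hindex.symm),
      ← Sylow.stabilizer_eq_normalizer, MulAction.mem_stabilizer_iff]
    exact Equiv.Perm.ext_iff.mp (MonoidHom.mem_ker.mp hg) P
  have hK : IsPGroup 2 φ.ker := P.isPGroup'.to_le hKP
  have hperm : Nat.card (Equiv.Perm (Sylow 2 G)) = 6 := by rw [Nat.card_perm, h]; rfl
  have hdvd : φ.ker.index ∣ 6 := index_ker φ ▸ hperm ▸ card_subgroup_dvd_card _
  obtain ⟨c, hc⟩ : 3 ∣ φ.ker.index := hindex ▸ index_dvd_of_le hKP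
  rcases (Nat.dvd_prime Nat.prime_two).mp
    (Nat.dvd_of_mul_dvd_mul_left three_pos (hc ▸ hdvd : 3 * c ∣ 3 * 2)) with rfl | rfl
  · exact .of_normal hK (IsPGroup.of_card (p := 3) (n := 1) (by rwa [pow_one]))
  · have hφ : Function.Surjective φ := MonoidHom.range_eq_top.mp
      (eq_top_of_card_eq _ (by rw [← index_ker, hc, hperm]))
    have : Fintype (Sylow 2 G) := Fintype.ofFinite _
    have : Nontrivial (Sylow 2 G) := Finite.one_lt_card_iff_nontrivial.mp (by omega)
    let H := (alternatingGroup (Sylow 2 G)).comap φ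
    have hH : H.index = 2 := (index_comap_of_surjective _ hφ).trans alternatingGroup.index_eq_two
    have hKH : φ.ker ≤ H := φ.ker_le_comap _
    have hrel : φ.ker.relIndex H = 3 := by
      have := relIndex_mul_index hKH
      rw [hH, hc] at this
      omega
    exact .of_le hKH hK (IsPGroup.of_card (p := 2) (n := 1) (by rwa [pow_one]))
      (isCyclic_of_prime_card (p := 3) hrel)

theorem hasOliverSeries_of_card_eq_three_mul_two_pow {k : ℕ} (hG : Nat.card G = 3 * 2 ^ k) :
    HasOliverSeries G := by
  obtain ⟨P⟩ : Nonempty (Sylow 2 G) := inferInstance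
  have hindex : (P : Subgroup G).index = 3 := P.index_eq_of_card_eq_mul hG (by norm_num)
  rcases (Nat.dvd_prime Nat.prime_three).mp (hindex ▸ P.card_dvd_index) with hone | hthree
  · have : Subsingleton (Sylow 2 G) := (Nat.card_eq_one_iff_unique.mp hone).1
    have := P.normal_of_subsingleton
    exact .of_normal P.isPGroup' (IsPGroup.of_card (p := 3) (n := 1) (by rwa [pow_one]))
  · exact hasOliverSeries_of_card_sylow_two_eq_three P hindex hthree

theorem exists_normal_index_eq_two_of_card_eq_two_mul {m : ℕ} (hG : Nat.card G = 2 * m)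
    (hm : Odd m) : ∃ K : Subgroup G, K.Normal ∧ K.index = 2 := by
  obtain ⟨P⟩ : Nonempty (Sylow 2 G) := inferInstance
  have hP : Nat.card P = 2 := by
    simpa using P.card_eq_pow_of_card_eq_mul (k := 1) (by rw [hG, pow_one, mul_comm])
      hm.not_two_dvd_nat
  have hmin : (Nat.card G).minFac = 2 := (Nat.minFac_eq_two_iff _).mpr ⟨m, hG⟩
  exact ⟨_, inferInstance,
    (IsCyclic.isComplement' hmin (isCyclic_of_prime_card hP)).symm.index_eq_card.trans hP⟩

theorem hasOliverSeries_of_card_eq_six_mul_prime {r : ℕ} (hr : r.Prime) (hr5 : 5 ≤ r)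
    (hG : Nat.card G = 6 * r) : HasOliverSeries G := by
  have := Fact.mk hr
  have hcop : ∀ {d : ℕ}, ¬ r ∣ d → d ∣ 3 * r → d ∣ 3 := fun hrd hd =>
    (Nat.coprime_comm.mp ((hr.coprime_iff_not_dvd).mpr hrd)).dvd_of_dvd_mul_right hd
  obtain ⟨K, hK, hK2⟩ := exists_normal_index_eq_two_of_card_eq_two_mul (m := 3 * r)
    (by rw [hG]; ring) (Nat.odd_mul.mpr ⟨by decide, hr.odd_of_ne_two (by omega)⟩)
  have hKcard : Nat.card K = 3 * r := by
    have := K.card_mul_index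
    rw [hK2, hG] at this
    omega
  have : Subsingleton (Sylow r K) := Sylow.subsingleton_of_forall_dvd_card (by
    rw [hKcard]
    intro d hd hmod
    have hrd : ¬ r ∣ d := fun h => by rw [Nat.mod_eq_zero_of_dvd h] at hmod; omega
    rcases (Nat.dvd_prime Nat.prime_three).mp (hcop hrd (Nat.dvd_of_mem_divisors hd)) with rfl | rfl
    · rfl
    · rw [Nat.mod_eq_of_lt (by omega)] at hmod; omega)
  obtain ⟨Q⟩ : Nonempty (Sylow r K) := inferInstance
  have hQ : ((Q : Subgroup K).map K.subtype).subgroupOf K = Q :=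
    comap_map_eq_self_of_injective K.subtype_injective _
  have hQ3 : (((Q : Subgroup K).map K.subtype).subgroupOf K).index ∣ 3 := by
    rw [hQ]
    exact hcop Q.not_dvd_index (hKcard ▸ index_dvd_card _)
  exact .of_le (map_subtype_le _) (Q.isPGroup'.map _)
    (IsPGroup.of_card (p := 2) (n := 1) (by rwa [pow_one])) (isCyclic_of_card_dvd_prime hQ3)

theorem IsSimpleGroup.isOliverGroup [IsSimpleGroup G] (hG : ¬ IsPrimePow (Nat.card G)) :
    IsOliverGroup G := by
  have hcard : ∀ q b : ℕ, q.Prime → Nat.card G ≠ q ^ b := by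
    rintro q (_ | b) hq h
    · exact Finite.one_lt_card.ne' (by rwa [pow_zero] at h)
    · exact hG (h ▸ hq.isPrimePow.pow b.succ_ne_zero)
  rintro ⟨P, H, -, hH, hPH, ⟨p, a, hp, hP⟩, ⟨q, b, hq, hGH⟩, hcyc⟩
  rcases hH.eq_bot_or_eq_top with rfl | rfl
  · exact hcard q b hq (by rwa [← Nat.card_congr QuotientGroup.quotientBot.toEquiv])
  have hPn : P.Normal := normalizer_eq_top_iff.mp
    (top_le_iff.mp ((normal_subgroupOf_iff_le_normalizer le_top).mp hPH))
  rcases hPn.eq_bot_or_eq_top with rfl | rfl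
  · let e : ((⊤ : Subgroup G) ⧸ (⊥ : Subgroup G).subgroupOf ⊤) ≃* G :=
      (QuotientGroup.quotientMulEquivOfEq (bot_subgroupOf _)).trans
        (QuotientGroup.quotientBot.trans topEquiv)
    have := isCyclic_of_surjective e e.surjective
    let := IsCyclic.commGroup (α := G)
    exact hcard _ 1 IsSimpleGroup.prime_card (pow_one _).symm
  · exact hcard p a hp (by rwa [card_top] at hP)

theorem hasOliverSeries_of_card_lt_sixty (hG : Nat.card G < 60) : HasOliverSeries G := by
  obtain ⟨n, hn⟩ : ∃ n, Nat.card G = n := ⟨_, rfl⟩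
  have hn0 : 0 < n := hn ▸ Nat.card_pos
  have hn60 : n < 60 := hn ▸ hG
  interval_cases n
  all_goals first
    | have hsylow : ∃ p ∈ (Nat.card G).primeFactors,
          (∀ d ∈ (Nat.card G).divisors, d % p = 1 → d = 1) ∧
            ((Nat.card G).primeFactors.erase p).card ≤ 1 := by
        rw [hn]; simp only [Nat.primeFactors, Nat.primeFactorsList_ofNat]; decide
      obtain ⟨p, hp, hforced, hfactors⟩ := hsylow
      exact hasOliverSeries_of_forall_dvd_card (Nat.prime_of_mem_primeFactors hp) hforced hfactors
    | skip
  -- the orders left: 1, 12, 24, 30, 36, 42, 48, 56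
  · exact hasOliverSeries_of_forall_dvd_card Nat.prime_two (by simp [hn]) (by simp [hn])
  · exact hasOliverSeries_of_card_eq_mul_prime_pow (b := 2) (k := 1) Nat.prime_three Nat.prime_two
      (by norm_num) (by norm_num) hn (by decide)
  · exact hasOliverSeries_of_card_eq_three_mul_two_pow (k := 3) hn
  · exact hasOliverSeries_of_card_eq_six_mul_prime (r := 5) (by norm_num) le_rfl hn
  · exact hasOliverSeries_of_card_eq_mul_prime_pow (b := 2) (k := 2) Nat.prime_three Nat.prime_two
      (by norm_num) le_rfl hn (by decide)
  · exact hasOliverSeries_of_card_eq_six_mul_prime (r := 7) (by norm_num) (by norm_num) hn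
  · exact hasOliverSeries_of_card_eq_three_mul_two_pow (k := 4) hn
  · exact hasOliverSeries_of_card_eq_mul_prime_pow (b := 3) (k := 1) (by norm_num : Nat.Prime 7)
      Nat.prime_two (by norm_num) (by norm_num) hn (by decide)

/-- Every finite group of order strictly less than `60` contains an Oliver series
(hence is not an Oliver group), while the alternating group `A₅` on `5` letters, of
order `60`, is an Oliver group; thus `A₅` is the smallest finite Oliver group. -/
theorem alternatingGroup_five_smallest_oliver :
    (∀ (G : Type) [Group G] [Finite G], Nat.card G < 60 → HasOliverSeries G) ∧
    Nat.card (alternatingGroup (Fin 5)) = 60 ∧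
    IsOliverGroup (alternatingGroup (Fin 5)) := by
  have hA5 : Nat.card (alternatingGroup (Fin 5)) = 60 := by
    rw [nat_card_alternatingGroup, Nat.card_fin]; rfl
  have : IsSimpleGroup (alternatingGroup (Fin 5)) := alternatingGroup.isSimpleGroup (by simp)
  refine ⟨fun _ _ _ => hasOliverSeries_of_card_lt_sixty, hA5, IsSimpleGroup.isOliverGroup ?_⟩
  rw [hA5, isPrimePow_iff_card_primeFactors_eq_one]
  simp [Nat.primeFactors, Nat.primeFactorsList_ofNat]
end

section
/- The group C₃ × S₄, the direct product of the cyclic group of order 3 and the symmetric group on 4 letters (a solvable group of order 72), is an Oliver group. -/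
/-!
Let `P ⊴ H ⊴ G` with `P` a `p`-group, `G ⧸ H` a `q`-group and `H ⧸ P` cyclic. Then `H` contains
every element of order prime to `q`, and `P` contains every commutator of two elements of `H`.
If `q = 3`, then `H` contains the transpositions of `S₄`, so `P` contains a 3-cycle (a commutator
of two transpositions) and a double transposition (a commutator of two 3-cycles), which is
impossible for a `p`-group. If `q ≠ 3`, then `H` contains every element of order 3; the double
transposition forces `p = 2`, and then the Sylow 3-subgroup `C₃ × C₃ ≤ H` meets `P` trivially
and so embeds in the cyclic group `H ⧸ P`, which is absurd.
-/

open Equiv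
open scoped commutatorElement

section

variable {G : Type*} [Group G]

theorem commutatorElement_mem_of_isCyclic_quotient {P H : Subgroup G}
    [(P.subgroupOf H).Normal] [IsCyclic (H ⧸ P.subgroupOf H)] {u v : G} (hu : u ∈ H)
    (hv : v ∈ H) : ⁅u, v⁆ ∈ P := by
  have h : QuotientGroup.mk' (P.subgroupOf H) ⁅(⟨u, hu⟩ : H), ⟨v, hv⟩⁆ = 1 := by
    rw [map_commutatorElement, commutatorElement_eq_one_iff_mul_comm]
    exact IsCyclic.isMulCommutative.is_comm.comm _ _
  rwa [QuotientGroup.mk'_apply, QuotientGroup.eq_one_iff, Subgroup.mem_subgroupOf] at h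

theorem Subgroup.mem_of_pow_eq_one_of_coprime_card_quotient {N : Subgroup G} [N.Normal]
    {g : G} {n : ℕ} (hg : g ^ n = 1) (hn : n.Coprime (Nat.card (G ⧸ N))) : g ∈ N := by
  have hdvd : orderOf (QuotientGroup.mk' N g) ∣ n :=
    (orderOf_map_dvd _ g).trans (orderOf_dvd_of_pow_eq_one hg)
  have h := (hn.coprime_dvd_left hdvd).eq_one_of_dvd (_root_.orderOf_dvd_natCard _)
  rwa [orderOf_eq_one_iff, QuotientGroup.mk'_apply, QuotientGroup.eq_one_iff] at h

theorem IsPGroup.eq_of_mem_of_orderOf_eq_prime {p r : ℕ} [Fact p.Prime] {P : Subgroup G}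
    (hP : IsPGroup p P) {g : G} (hg : g ∈ P) (hr : r.Prime) (hgr : orderOf g = r) : p = r := by
  have hg1 : g ≠ 1 := by
    rintro rfl
    exact hr.ne_one (hgr.symm.trans orderOf_one)
  have hdvd := hP.dvd_orderOf (g := ⟨g, hg⟩) (by simpa using hg1)
  rw [Subgroup.orderOf_mk, hgr] at hdvd
  exact (Nat.prime_dvd_prime_iff_eq Fact.out hr).mp hdvd

theorem isCyclic_of_le_of_coprime_card {P H K : Subgroup G} [(P.subgroupOf H).Normal]
    [IsCyclic (H ⧸ P.subgroupOf H)] (hKH : K ≤ H) (hKP : (Nat.card K).Coprime (Nat.card P)) :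
    IsCyclic K := by
  refine isCyclic_of_injective ((QuotientGroup.mk' (P.subgroupOf H)).comp
    (Subgroup.inclusion hKH)) ?_
  rw [← MonoidHom.ker_eq_bot_iff, eq_bot_iff]
  intro k hk
  rw [MonoidHom.mem_ker, MonoidHom.comp_apply, QuotientGroup.mk'_apply,
    QuotientGroup.eq_one_iff, Subgroup.mem_subgroupOf] at hk
  exact Subgroup.mem_bot.mpr
    (Subtype.ext (Subgroup.disjoint_def.mp (Subgroup.disjoint_of_coprime_natCard hKP) k.2 hk))

end

theorem alternatingGroup.isSolvable_of_card_eq_four {α : Type*} [DecidableEq α] [Fintype α]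
    (hα4 : Nat.card α = 4) : Group.IsSolvable (alternatingGroup α) := by
  have := kleinFour_isKleinFour hα4
  have : Group.IsSolvable (kleinFour α) :=
    Group.isSolvable_of_comm IsKleinFour.isMulCommutative.is_comm.comm
  refine Group.isSolvable_of_ker_le_range (kleinFour α).subtype Abelianization.of ?_
  rw [Abelianization.ker_of, ← kleinFour_eq_commutator hα4, Subgroup.range_subtype]

theorem Equiv.Perm.isSolvable_of_card_eq_four {α : Type*} [DecidableEq α] [Fintype α]
    (hα4 : Nat.card α = 4) : Group.IsSolvable (Perm α) :=
  have := alternatingGroup.isSolvable_of_card_eq_four hα4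
  Group.isSolvable_of_ker_le_range (alternatingGroup α).subtype Perm.sign
    (Subgroup.range_subtype _).ge

abbrev C3S4 : Type := Multiplicative (ZMod 3) × Perm (Fin 4)

namespace C3S4

def transposition (i j : Fin 4) : C3S4 := (1, swap i j)

theorem transposition_sq (i j : Fin 4) : transposition i j ^ 2 = 1 :=
  Prod.ext (one_pow 2) (by rw [Prod.pow_snd, sq, transposition, swap_mul_self]; rfl)

def threeCycle₁ : C3S4 := ⁅transposition 0 1, transposition 1 2⁆

def threeCycle₂ : C3S4 := ⁅transposition 0 1, transposition 1 3⁆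

theorem orderOf_threeCycle₁ : orderOf threeCycle₁ = 3 :=
  orderOf_eq_prime (by decide) (by decide)

theorem orderOf_threeCycle₂ : orderOf threeCycle₂ = 3 :=
  orderOf_eq_prime (by decide) (by decide)

set_option maxRecDepth 10000 in
theorem orderOf_commutator_threeCycle : orderOf ⁅threeCycle₁, threeCycle₂⁆ = 2 :=
  orderOf_eq_prime (by decide) (by decide)

theorem orderOf_swap_mul_swap : orderOf (swap 0 1 * swap 1 2 : Perm (Fin 4)) = 3 :=
  orderOf_eq_prime (by decide) (by decide)

def sylowThree : Subgroup C3S4 :=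
  (⊤ : Subgroup (Multiplicative (ZMod 3))).prod (Subgroup.zpowers (swap 0 1 * swap 1 2))

theorem card_sylowThree : Nat.card sylowThree = 9 := by
  rw [sylowThree, Nat.card_congr (Subgroup.prodEquiv _ _).toEquiv, Nat.card_prod,
    Subgroup.card_top, Nat.card_zpowers, orderOf_swap_mul_swap]
  simp

theorem not_isCyclic_sylowThree : ¬ IsCyclic sylowThree := by
  intro h
  unfold sylowThree at h
  have := isCyclic_of_surjective _ (Subgroup.prodEquiv (⊤ : Subgroup (Multiplicative (ZMod 3)))
    (Subgroup.zpowers (swap 0 1 * swap 1 2 : Perm (Fin 4)))).surjective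
  have := coprime_card_of_isCyclic_prod (⊤ : Subgroup (Multiplicative (ZMod 3)))
    (Subgroup.zpowers (swap 0 1 * swap 1 2 : Perm (Fin 4)))
  rw [Subgroup.card_top, Nat.card_zpowers, orderOf_swap_mul_swap] at this
  simp at this

theorem pow_three_eq_one_of_mem_sylowThree {x : C3S4} (hx : x ∈ sylowThree) : x ^ 3 = 1 := by
  obtain ⟨-, hx⟩ := hx
  refine Prod.ext ((by decide : ∀ a : Multiplicative (ZMod 3), a ^ 3 = 1) x.1) ?_
  exact orderOf_dvd_iff_pow_eq_one.mp
    ((orderOf_dvd_of_mem_zpowers hx).trans orderOf_swap_mul_swap.dvd)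

variable {P H : Subgroup C3S4} [H.Normal] [(P.subgroupOf H).Normal]
  [IsCyclic (H ⧸ P.subgroupOf H)] {p : ℕ} [Fact p.Prime]

theorem card_quotient_ne_three_pow (hP : IsPGroup p P) (b : ℕ) :
    Nat.card (C3S4 ⧸ H) ≠ 3 ^ b := by
  intro hH
  have mem_of_sq_eq_one {g : C3S4} (hg : g ^ 2 = 1) : g ∈ H :=
    Subgroup.mem_of_pow_eq_one_of_coprime_card_quotient hg (by
      rw [hH]
      exact (Nat.coprime_primes Nat.prime_two Nat.prime_three).mpr (by decide) |>.pow_right b)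
  have h₀₁ := mem_of_sq_eq_one (transposition_sq 0 1)
  have h₁₂ := mem_of_sq_eq_one (transposition_sq 1 2)
  have h₁ : threeCycle₁ ∈ H := Subgroup.commutator_le_left H H
    (Subgroup.commutator_mem_commutator h₀₁ h₁₂)
  have h₂ : threeCycle₂ ∈ H := Subgroup.commutator_le_left H H
    (Subgroup.commutator_mem_commutator h₀₁ (mem_of_sq_eq_one (transposition_sq 1 3)))
  have h₁P : threeCycle₁ ∈ P := commutatorElement_mem_of_isCyclic_quotient h₀₁ h₁₂
  have h₁₂P : ⁅threeCycle₁, threeCycle₂⁆ ∈ P := commutatorElement_mem_of_isCyclic_quotient h₁ h₂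
  have hp3 := hP.eq_of_mem_of_orderOf_eq_prime h₁P Nat.prime_three orderOf_threeCycle₁
  have hp2 := hP.eq_of_mem_of_orderOf_eq_prime h₁₂P Nat.prime_two orderOf_commutator_threeCycle
  omega

theorem card_quotient_ne_prime_pow (hP : IsPGroup p P) {q : ℕ} (hq : q.Prime) (hq3 : q ≠ 3)
    (b : ℕ) : Nat.card (C3S4 ⧸ H) ≠ q ^ b := by
  intro hH
  have mem_of_pow_three_eq_one {g : C3S4} (hg : g ^ 3 = 1) : g ∈ H :=
    Subgroup.mem_of_pow_eq_one_of_coprime_card_quotient hg (by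
      rw [hH]
      exact (Nat.coprime_primes Nat.prime_three hq).mpr hq3.symm |>.pow_right b)
  have h₁₂P : ⁅threeCycle₁, threeCycle₂⁆ ∈ P := commutatorElement_mem_of_isCyclic_quotient
    (mem_of_pow_three_eq_one (orderOf_dvd_iff_pow_eq_one.mp orderOf_threeCycle₁.dvd))
    (mem_of_pow_three_eq_one (orderOf_dvd_iff_pow_eq_one.mp orderOf_threeCycle₂.dvd))
  have hp2 : p = 2 :=
    hP.eq_of_mem_of_orderOf_eq_prime h₁₂P Nat.prime_two orderOf_commutator_threeCycle
  obtain ⟨a, hPa⟩ := (hp2 ▸ hP).exists_card_eq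
  have hcop : (Nat.card sylowThree).Coprime (Nat.card P) := by
    rw [card_sylowThree, hPa]
    exact (Nat.coprime_primes Nat.prime_three Nat.prime_two).mpr (by decide) |>.pow 2 a
  exact not_isCyclic_sylowThree (isCyclic_of_le_of_coprime_card
    (fun _ hx ↦ mem_of_pow_three_eq_one (pow_three_eq_one_of_mem_sylowThree hx)) hcop)

end C3S4

/-- The group `C₃ × S₄`, the direct product of the cyclic group of order `3` and the
symmetric group on `4` letters — a solvable group of order `72` — is an Oliver group. -/
theorem isOliverGroup_C3_prod_S4 :
    IsSolvable (Multiplicative (ZMod 3) × Equiv.Perm (Fin 4)) ∧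
    Nat.card (Multiplicative (ZMod 3) × Equiv.Perm (Fin 4)) = 72 ∧
    IsOliverGroup (Multiplicative (ZMod 3) × Equiv.Perm (Fin 4)) := by
  refine ⟨?_, by simp [Fintype.card_perm, Nat.factorial], ?_⟩
  · have := Perm.isSolvable_of_card_eq_four (α := Fin 4) (by simp)
    exact (inferInstance : Group.IsSolvable C3S4)
  · rintro ⟨P, H, -, hH, hPH, ⟨p, a, hp, hP⟩, ⟨q, b, hq, hHq⟩, hcyc⟩
    have := Fact.mk hp
    obtain rfl | hq3 := eq_or_ne q 3
    · exact C3S4.card_quotient_ne_three_pow (IsPGroup.of_card hP) b hHq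
    · exact C3S4.card_quotient_ne_prime_pow (IsPGroup.of_card hP) hq hq3 b hHq
end

section
/- Let G be a finite group having a normal Sylow 2-subgroup. Then no element of G of non-prime-power order is conjugate in G to its inverse; that is, for all g, h in G with h g h⁻¹ = g⁻¹, the order of g is a prime power (where 1 counts as a prime power p^0). -/
/-- If `k` conjugates `q` to `q⁻¹` and `k` and `q` both have odd order, then `q = 1`. -/
lemma aux_conj_inv_odd {Q : Type*} [Group Q] {q k : Q} (h1 : k * q * k⁻¹ = q⁻¹)
    (hk : Odd (orderOf k)) (hq : Odd (orderOf q)) : q = 1 := by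
  have hinv : k * q⁻¹ * k⁻¹ = q := by
    have h2 := congrArg Inv.inv h1
    rw [inv_inv] at h2
    simpa [mul_inv_rev, mul_assoc] using h2
  have e2 : k * q = q⁻¹ * k := by
    have := congrArg (· * k) h1; simpa [mul_assoc] using this
  have e1 : k * q⁻¹ = q * k := by
    have := congrArg (· * k) hinv; simpa [mul_assoc] using this
  have h2 : Commute (k ^ 2) q := by
    show k ^ 2 * q = q * k ^ 2
    calc k ^ 2 * q = k * (k * q) := by rw [pow_two, mul_assoc]
      _ = k * q⁻¹ * k := by rw [e2, mul_assoc]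
      _ = q * k * k := by rw [e1]
      _ = q * k ^ 2 := by rw [pow_two, mul_assoc]
  obtain ⟨s, hs⟩ := hk
  have h1' : k ^ (2 * s) * k = 1 := by rw [← pow_succ, ← hs, pow_orderOf_eq_one]
  have hpow : (k ^ 2) ^ s = k⁻¹ := by
    rw [← pow_mul]; exact eq_inv_of_mul_eq_one_left h1'
  have hcomm : Commute k⁻¹ q := hpow ▸ h2.pow_left s
  have hcomm' : Commute k q := (Commute.inv_left_iff).mp hcomm
  have hq2 : q⁻¹ = q := by rw [← h1, hcomm'.eq, mul_assoc, mul_inv_cancel, mul_one]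
  have hq2' : q ^ 2 = 1 := by
    rw [pow_two]; nth_rewrite 1 [← hq2]; exact inv_mul_cancel q
  have hdvd : orderOf q ∣ 2 := orderOf_dvd_of_pow_eq_one hq2'
  have : orderOf q = 1 :=
    Nat.Coprime.eq_one_of_dvd (Odd.coprime_two_right hq) hdvd
  exact orderOf_eq_one_iff.mp this

/-- In a finite group `G` with a normal Sylow `2`-subgroup, no element of
non-prime-power order is conjugate to its inverse: whenever `h * g * h⁻¹ = g⁻¹`, the
order of `g` is a prime power `p ^ n` with `n ≥ 0` (so order `1` counts as `p ^ 0`). -/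
theorem orderOf_isPrimePow_of_conj_inv (G : Type*) [Group G] [Finite G]
    (hSyl : ∃ S : Sylow 2 G, (S : Subgroup G).Normal)
    (g h : G) (hconj : h * g * h⁻¹ = g⁻¹) :
    ∃ p n : ℕ, p.Prime ∧ orderOf g = p ^ n := by
  obtain ⟨S, hS⟩ := hSyl
  haveI := hS
  haveI : Fact (Nat.Prime 2) := ⟨Nat.prime_two⟩
  set N := orderOf g with hN
  have hNpos : 0 < N := orderOf_pos g
  set a := N.factorization 2 with ha
  set m := N / 2 ^ a with hm
  set y := g ^ (2 ^ a) with hy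
  have hdvd2a : 2 ^ a ∣ N := Nat.ordProj_dvd N 2
  have hordy : orderOf y = m := by
    rw [hy, orderOf_pow, Nat.gcd_eq_right hdvd2a]
  have hmodd : Odd m := Nat.odd_iff.mpr (Nat.two_dvd_ne_zero.mp
    (Nat.not_dvd_ordCompl Nat.prime_two hNpos.ne'))
  have hyconj : h * y * h⁻¹ = y⁻¹ := by
    rw [hy, ← conj_pow, hconj, inv_pow]
  -- pass to the quotient G ⧸ S
  let π : G →* G ⧸ (S : Subgroup G) := QuotientGroup.mk' (S : Subgroup G)
  have hQconj : π h * π y * (π h)⁻¹ = (π y)⁻¹ := by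
    rw [← map_inv, ← map_mul, ← map_mul, hyconj, map_inv]
  have hQodd : Odd (Nat.card (G ⧸ (S : Subgroup G))) := by
    have h2 := S.not_dvd_index (p := 2)
    rw [Subgroup.index] at h2
    rw [Nat.odd_iff]
    omega
  have hkodd : Odd (orderOf (π h)) :=
    hQodd.of_dvd_nat (orderOf_dvd_natCard _)
  have hqodd : Odd (orderOf (π y)) := by
    have h1 : orderOf (π y) ∣ orderOf y := orderOf_map_dvd π y
    rw [hordy] at h1
    exact hmodd.of_dvd_nat h1
  have hy1 : π y = 1 := aux_conj_inv_odd hQconj hkodd hqodd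
  have hymem : y ∈ (S : Subgroup G) := (QuotientGroup.eq_one_iff y).mp hy1
  obtain ⟨k, hk⟩ := S.2 ⟨y, hymem⟩
  have hpow : y ^ (2 ^ k) = 1 := by
    have := congrArg (Subgroup.subtype (S : Subgroup G)) hk
    simpa using this
  have hmdvd : m ∣ 2 ^ k := hordy ▸ orderOf_dvd_of_pow_eq_one hpow
  have hm1 : m = 1 := Nat.Coprime.eq_one_of_dvd
    (Nat.Coprime.pow_right k (Odd.coprime_two_right hmodd)) hmdvd
  refine ⟨2, a, Nat.prime_two, ?_⟩
  have hfin := Nat.ordProj_mul_ordCompl_eq_self N 2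
  rw [← ha, ← hm, hm1, mul_one] at hfin
  exact hfin.symm
end

section
/- If a finite group G has subgroups K and H with K normal in H ≤ G such that the quotient group H/K is isomorphic to the dihedral group of order 2pq for two distinct primes p and q, then G contains an element g whose order is not a prime power and which is conjugate in G to its inverse g⁻¹. -/
/-!
Pass to a subgroup `X ≤ H` that is minimal among those mapping onto `D = DihedralGroup (p * q)`.
For `ℓ ∈ {p, q}` the rotations of order `ℓ` form a normal `ℓ`-subgroup of `D`; by the Frattini
argument the normalizer of a Sylow `ℓ`-subgroup of its preimage still maps onto `D`, so by
minimality this Sylow subgroup `P_ℓ` is normal in `X`. Fix a `2`-element `t` mapping to a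
reflection. The map `y ↦ t y⁻¹ t⁻¹` has `2`-power order, so counting its fixed points modulo `2`
gives `x_ℓ ∈ P_ℓ` of order divisible by `ℓ` with `t x_ℓ t⁻¹ = x_ℓ⁻¹`: for odd `ℓ` on a fibre of
`P_ℓ → D`, which has odd size, and for `ℓ = 2` on `P_ℓ` itself, where it yields an involution
commuting with `t`. Finally `x_p` and `x_q` commute, and `x_p x_q` is inverted by `t` and has order
divisible by `pq`.
-/

open Equiv Subgroup

namespace DihedralGroup

variable {n : ℕ}

theorem sr_mul_r_mul_inv_sr (i j : ZMod n) : sr i * r j * (sr i)⁻¹ = (r j)⁻¹ := by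
  simp [inv_sr, inv_r, sr_mul_r, sr_mul_sr]

theorem normal_zpowers_r (i : ZMod n) : (zpowers (r i)).Normal := by
  refine ⟨fun c hc g => ?_⟩
  obtain ⟨k, rfl⟩ := mem_zpowers_iff.mp hc
  rw [r_zpow]
  cases g with
  | r j => simpa [inv_r, r_mul_r] using zpow_mem (mem_zpowers (r i)) k
  | sr j => simpa [sr_mul_r_mul_inv_sr, r_zpow] using inv_mem (zpow_mem (mem_zpowers (r i)) k)

theorem orderOf_r_div [NeZero n] {ℓ : ℕ} (hℓ : ℓ ∣ n) :
    orderOf (r (n / ℓ : ℕ) : DihedralGroup n) = ℓ := by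
  have := orderOf_pow_orderOf_div (x := (r 1 : DihedralGroup n)) (n := ℓ)
    (by simp [orderOf_r_one, NeZero.ne n]) (by rwa [orderOf_r_one])
  rwa [orderOf_r_one, r_one_pow] at this

end DihedralGroup

section

variable {X : Type*} [Group X] [Finite X]

theorem exists_pow_two_pow_eq_one_map_eq {M : Type*} [Monoid M] (ψ : X →* M) {x : X}
    (hx : ψ x ^ 2 = 1) : ∃ t : X, ∃ a : ℕ, t ^ 2 ^ a = 1 ∧ ψ t = ψ x := by
  obtain ⟨a, d, ⟨k, rfl⟩, hx'⟩ := Nat.exists_eq_two_pow_mul_odd (orderOf_pos x).ne'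
  refine ⟨x ^ (2 * k + 1), a, by rw [← pow_mul, mul_comm, ← hx', pow_orderOf_eq_one], ?_⟩
  rw [map_pow, pow_succ, pow_mul, hx, one_pow, one_mul]

theorem exists_mem_map_eq_conj_eq_inv {M : Type*} [Group M] (ψ : X →* M) {N : Subgroup X}
    [hN : N.Normal] (hodd : Odd (Nat.card N)) {t : X} {a : ℕ} (ht : t ^ 2 ^ a = 1) {x₀ : X}
    (hx₀ : x₀ ∈ N) (hinv : ψ t * ψ x₀ * (ψ t)⁻¹ = (ψ x₀)⁻¹) :
    ∃ x ∈ N, ψ x = ψ x₀ ∧ t * x * t⁻¹ = x⁻¹ := by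
  classical
  let κ : X →* Perm X := (MulAut.toPerm X).comp MulAut.conj
  have hκ : ∀ s y, κ s y = s * y * s⁻¹ := fun _ _ => rfl
  let σ : Perm X := κ t * Equiv.inv X
  have hσ : σ ^ 2 ^ (a + 1) = 1 := by
    have hsq : σ ^ 2 = κ (t ^ 2) := by
      ext y; simp [σ, hκ, sq, Perm.mul_apply]; group
    rw [pow_succ', pow_mul, hsq, ← map_pow, ← pow_mul, mul_comm, pow_mul, ht, one_pow, map_one]
  let Y : Set X := {y | y ∈ N ∧ ψ y = ψ x₀}
  have : Fintype Y := Fintype.ofFinite Y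
  have hY : ∀ y, σ y ∈ Y ↔ y ∈ Y := by
    intro y
    have hN' : t * y⁻¹ * t⁻¹ ∈ N ↔ y ∈ N :=
      ⟨fun h => by simpa [mul_assoc] using hN.conj_mem _ h t⁻¹,
        fun h => hN.conj_mem _ (N.inv_mem h) t⟩
    have hψ' : MulAut.conj (ψ t) (ψ y)⁻¹ = ψ x₀ ↔ ψ y = ψ x₀ := by
      have hc : MulAut.conj (ψ t) (ψ x₀)⁻¹ = ψ x₀ := by
        rw [map_inv, MulAut.conj_apply, hinv, inv_inv]
      conv_lhs => rw [← hc, (MulAut.conj (ψ t)).injective.eq_iff, inv_inj]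
    simpa [Y, σ, hκ, Perm.mul_apply] using and_congr hN' hψ'
  have hcard : Nat.card Y = Nat.card (N ⊓ ψ.ker : Subgroup X) :=
    Nat.card_congr <| Equiv.subtypeEquiv (Equiv.mulLeft x₀⁻¹) fun y => by
      simp [Y, mem_inf, N.mul_mem_cancel_left (N.inv_mem hx₀), inv_mul_eq_one, eq_comm (a := ψ y)]
  have hY_odd : ¬ 2 ∣ Fintype.card Y := by
    rw [← Nat.card_eq_fintype_card, hcard, ← even_iff_two_dvd, Nat.not_even_iff_odd]
    exact Odd.of_dvd_nat hodd (card_dvd_of_le inf_le_left)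
  obtain ⟨⟨x, hxN, hxψ⟩, hx⟩ := Perm.exists_fixed_point_of_prime hY_odd (σ := σ.subtypePerm hY)
    (n := a + 1) (by ext; simp [Perm.subtypePerm_pow, hσ])
  refine ⟨x, hxN, hxψ, ?_⟩
  have hx : (t * x⁻¹ * t⁻¹)⁻¹ = x⁻¹ := by
    simpa [σ, hκ, Perm.mul_apply] using congrArg (fun y : Y => (y : X)⁻¹) hx
  simpa [mul_assoc] using hx

theorem exists_orderOf_eq_two_commute {N : Subgroup X} [N.Normal] (hN : IsPGroup 2 N)
    (hN_ne : N ≠ ⊥) {t : X} {a : ℕ} (ht : t ^ 2 ^ a = 1) :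
    ∃ z ∈ N, orderOf z = 2 ∧ Commute t z := by
  classical
  have := Fintype.ofFinite N
  let σ : Perm N := MulAut.toPerm N (MulAut.conjNormal t)
  have hσ_apply : ∀ y, (σ y : X) = t * y * t⁻¹ := fun _ => rfl
  have hσ : σ ^ 2 ^ a = 1 := by simp only [σ, ← map_pow, ht, map_one]
  have heven : 2 ∣ Fintype.card N := by
    rw [← Nat.card_eq_fintype_card]
    exact hN.card_eq_or_dvd.resolve_left (by rwa [card_eq_one])
  obtain ⟨z, hz, hz1⟩ :=
    Perm.exists_fixed_point_of_prime' heven hσ (a := 1) (Subtype.ext (by simp [hσ_apply]))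
  have hcomm : Commute t z := by
    have := congrArg Subtype.val hz
    rw [hσ_apply, mul_inv_eq_iff_eq_mul] at this
    exact this
  have h2 : 2 ∣ orderOf (z : X) := orderOf_coe z ▸ hN.dvd_orderOf hz1
  exact ⟨_, N.pow_mem z.2 _, orderOf_pow_orderOf_div (orderOf_pos _).ne' h2, hcomm.pow_right _⟩

theorem exists_mem_dvd_orderOf_conj_eq_inv {M : Type*} [Group M] (ψ : X →* M) {ℓ : ℕ}
    [hℓ : Fact ℓ.Prime] {P : Subgroup X} [P.Normal] (hP : IsPGroup ℓ P) {t : X} {a : ℕ}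
    (ht : t ^ 2 ^ a = 1) {c : M} (hc : c ∈ P.map ψ) (hcℓ : orderOf c = ℓ)
    (hinv : ψ t * c * (ψ t)⁻¹ = c⁻¹) : ∃ x ∈ P, ℓ ∣ orderOf x ∧ t * x * t⁻¹ = x⁻¹ := by
  obtain ⟨x₀, hx₀, rfl⟩ := hc
  rcases eq_or_ne ℓ 2 with rfl | hℓ2
  · have hP_ne : P ≠ ⊥ := by
      rintro rfl
      rw [mem_bot.mp hx₀, map_one, orderOf_one] at hcℓ
      exact Nat.prime_two.ne_one hcℓ.symm
    obtain ⟨z, hz, hz2, hzt⟩ := exists_orderOf_eq_two_commute hP hP_ne ht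
    have hz_sq : z ^ 2 = 1 := hz2 ▸ pow_orderOf_eq_one z
    refine ⟨z, hz, hz2.symm.dvd, ?_⟩
    rw [hzt.eq, mul_inv_cancel_right, eq_comm, inv_eq_iff_mul_eq_one, ← sq, hz_sq]
  · have hodd : Odd (Nat.card P) := by
      obtain ⟨k, hk⟩ := IsPGroup.iff_card.mp hP
      exact hk ▸ (hℓ.out.odd_of_ne_two hℓ2).pow
    obtain ⟨x, hx, hxψ, hxt⟩ := exists_mem_map_eq_conj_eq_inv ψ hodd ht hx₀ hinv
    exact ⟨x, hx, hcℓ ▸ hxψ ▸ orderOf_map_dvd ψ x, hxt⟩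

theorem exists_normal_isPGroup_map_eq {M : Type*} [Group M] {ψ : X →* M}
    (hψ : Function.Surjective ψ) (hmin : ∀ Y : Subgroup X, Y.map ψ = ⊤ → Y = ⊤)
    {ℓ : ℕ} [Fact ℓ.Prime] {C : Subgroup M} [C.Normal] (hC : IsPGroup ℓ C) :
    ∃ P : Subgroup X, P.Normal ∧ IsPGroup ℓ P ∧ P.map ψ = C := by
  let V := C.comap ψ
  obtain ⟨S⟩ : Nonempty (Sylow ℓ V) := inferInstance
  let ρ : V →* C := (ψ.comp V.subtype).codRestrict C fun v => v.2
  have hρ : Function.Surjective ρ := fun c => by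
    obtain ⟨x, hx⟩ := hψ c
    exact ⟨⟨x, show ψ x ∈ C from hx ▸ c.2⟩, Subtype.ext hx⟩
  have hSC : (S.map V.subtype).map ψ = C := by
    have htop := (S.mapSurjective hρ).is_maximal' (hC.to_subgroup ⊤) le_top
    rw [Sylow.coe_mapSurjective] at htop
    have := congrArg (map C.subtype) htop
    rw [← MonoidHom.range_eq_map, range_subtype, map_map] at this
    rw [map_map, this]
    rfl
  refine ⟨S.map V.subtype, ?_, S.2.map V.subtype, hSC⟩
  rw [← normalizer_eq_top_iff]
  apply hmin
  have hFrattini := congrArg (map ψ) (Sylow.normalizer_sup_eq_top S)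
  rw [Subgroup.map_sup, map_top_of_surjective ψ hψ, map_comap_eq_self_of_surjective hψ, ← hSC,
    sup_eq_left.mpr (map_mono le_normalizer)] at hFrattini
  exact hFrattini

open DihedralGroup in
theorem exists_dvd_orderOf_isConj_inv_of_minimal {n : ℕ} [NeZero n] {ψ : X →* DihedralGroup n}
    (hψ : Function.Surjective ψ) (hmin : ∀ Y : Subgroup X, Y.map ψ = ⊤ → Y = ⊤) {p q : ℕ}
    (hp : p.Prime) (hq : q.Prime) (hpq : p ≠ q) (hpn : p ∣ n) (hqn : q ∣ n) :
    ∃ g : X, p ∣ orderOf g ∧ q ∣ orderOf g ∧ IsConj g g⁻¹ := by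
  obtain ⟨t₀, ht₀⟩ := hψ (sr 0)
  obtain ⟨t, a, ht, htψ⟩ := exists_pow_two_pow_eq_one_map_eq ψ (x := t₀) (by
    rw [ht₀, sq, sr_mul_self])
  have key : ∀ ℓ : ℕ, ℓ.Prime → ℓ ∣ n → ∃ P : Subgroup X, P.Normal ∧ IsPGroup ℓ P ∧
      ∃ x ∈ P, ℓ ∣ orderOf x ∧ t * x * t⁻¹ = x⁻¹ := by
    intro ℓ hℓ hℓn
    have := Fact.mk hℓ
    have hc := orderOf_r_div hℓn
    have := normal_zpowers_r ((n / ℓ : ℕ) : ZMod n)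
    obtain ⟨P, hPn, hP, hPC⟩ := exists_normal_isPGroup_map_eq hψ hmin
      (IsPGroup.of_card (n := 1) (by rw [Nat.card_zpowers, hc, pow_one]))
    exact ⟨P, hPn, hP, exists_mem_dvd_orderOf_conj_eq_inv ψ hP ht (hPC ▸ mem_zpowers _) hc
      (by rw [htψ, ht₀, sr_mul_r_mul_inv_sr])⟩
  obtain ⟨Pp, hPpn, hPp, xp, hxp, hpx, hxpt⟩ := key p hp hpn
  obtain ⟨Pq, hPqn, hPq, xq, hxq, hqx, hxqt⟩ := key q hq hqn
  have := Fact.mk hp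
  have := Fact.mk hq
  have hcomm : Commute xp xq := commute_of_normal_of_disjoint _ _ hPpn hPqn
    (IsPGroup.disjoint_of_ne p q hpq _ _ hPp hPq) xp xq hxp hxq
  have hcop : (orderOf xp).Coprime (orderOf xq) := by
    obtain ⟨i, hi⟩ := IsPGroup.iff_orderOf.mp hPp ⟨xp, hxp⟩
    obtain ⟨j, hj⟩ := IsPGroup.iff_orderOf.mp hPq ⟨xq, hxq⟩
    rw [← orderOf_mk xp hxp, ← orderOf_mk xq hxq, hi, hj]
    exact Nat.coprime_pow_primes i j hp hq hpq
  refine ⟨xp * xq, ?_, ?_, isConj_iff.mpr ⟨t, ?_⟩⟩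
  · exact hcomm.orderOf_mul_eq_mul_orderOf_of_coprime hcop ▸ dvd_mul_of_dvd_left hpx _
  · exact hcomm.orderOf_mul_eq_mul_orderOf_of_coprime hcop ▸ dvd_mul_of_dvd_right hqx _
  · calc t * (xp * xq) * t⁻¹ = (t * xp * t⁻¹) * (t * xq * t⁻¹) := by group
      _ = (xp * xq)⁻¹ := by rw [hxpt, hxqt, ← mul_inv_rev, hcomm.eq]

theorem exists_dvd_orderOf_isConj_inv {n : ℕ} [NeZero n] {ψ : X →* DihedralGroup n}
    (hψ : Function.Surjective ψ) {p q : ℕ} (hp : p.Prime) (hq : q.Prime) (hpq : p ≠ q)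
    (hpn : p ∣ n) (hqn : q ∣ n) :
    ∃ g : X, p ∣ orderOf g ∧ q ∣ orderOf g ∧ IsConj g g⁻¹ := by
  induction hX : Nat.card X using Nat.strong_induction_on generalizing X with
  | _ _ ih =>
  by_cases hmin : ∀ Y : Subgroup X, Y.map ψ = ⊤ → Y = ⊤
  · exact exists_dvd_orderOf_isConj_inv_of_minimal hψ hmin hp hq hpq hpn hqn
  push Not at hmin
  obtain ⟨Y, hYψ, hY⟩ := hmin
  obtain ⟨x, hxY⟩ := SetLike.exists_not_mem_of_ne_top Y hY rfl
  have hψY : Function.Surjective (ψ.comp Y.subtype) := by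
    rwa [← MonoidHom.range_eq_top, MonoidHom.range_comp, range_subtype]
  obtain ⟨g, hpg, hqg, hg⟩ := ih _ (hX ▸ Finite.card_subtype_lt hxY) hψY rfl
  exact ⟨g, by rwa [orderOf_coe], by rwa [orderOf_coe], Y.subtype.map_isConj hg⟩

end

theorem exists_conj_inv_of_dihedral_subquotient_general (G : Type*) [Group G] [Finite G]
    (p q : ℕ) (hp : p.Prime) (hq : q.Prime) (hpq : p ≠ q)
    (H : Subgroup G)
    (φ : H →* DihedralGroup (p * q)) (hsurj : Function.Surjective φ) :
    ∃ g : G, (∃ p' q' : ℕ, p'.Prime ∧ q'.Prime ∧ p' ≠ q' ∧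
        p' ∣ orderOf g ∧ q' ∣ orderOf g) ∧
      IsConj g g⁻¹ := by
  have : NeZero (p * q) := ⟨mul_ne_zero hp.ne_zero hq.ne_zero⟩
  obtain ⟨g, hpg, hqg, hg⟩ := exists_dvd_orderOf_isConj_inv hsurj hp hq hpq
    (dvd_mul_right p q) (dvd_mul_left q p)
  exact ⟨g, ⟨p, q, hp, hq, hpq, by rwa [orderOf_coe], by rwa [orderOf_coe]⟩,
    H.subtype.map_isConj hg⟩

/-- If a finite group `G` has subgroups `K ⊴ H ≤ G` such that `H/K` is isomorphic to
the dihedral group of order `2pq` for two distinct primes `p` and `q` (expressed via a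
surjective homomorphism `H →* DihedralGroup (p * q)` with kernel `K`), then `G` has an
element `g` of non-prime-power order (i.e. with at least two distinct primes dividing
its order) which is conjugate in `G` to its inverse `g⁻¹`. -/
theorem exists_conj_inv_of_dihedral_subquotient (G : Type*) [Group G] [Finite G]
    (p q : ℕ) (hp : p.Prime) (hq : q.Prime) (hpq : p ≠ q)
    (H K : Subgroup G) (hKH : K ≤ H)
    (φ : H →* DihedralGroup (p * q)) (hsurj : Function.Surjective φ)
    (hker : MonoidHom.ker φ = K.subgroupOf H) :
    ∃ g : G, (∃ p' q' : ℕ, p'.Prime ∧ q'.Prime ∧ p' ≠ q' ∧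
        p' ∣ orderOf g ∧ q' ∣ orderOf g) ∧
      IsConj g g⁻¹ :=
  exists_conj_inv_of_dihedral_subquotient_general G p q hp hq hpq H φ hsurj
end
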